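/- arXiv:2501.09323 — 4 statements merged into one kernel-verified Lean document; each statement's English description precedes it below -/
import Mathlib

section
/- Let ψ : [0,∞) → ℝ be a continuous function with ψ(0) ≥ 0, and define x(t) = Γ(ψ)(t) = ψ(t) − min(0, inf_{s∈[0,t]} ψ(s)) and φ(t) = x(t) − ψ(t). Then: x is continuous; x(t) ≥ 0 for all t ≥ 0; φ is nondecreasing with φ(0) = 0; and φ increases only when x is at zero, in the sense that for all 0 ≤ a ≤ b, if x(s) > 0 for every s ∈ [a,b], then φ(b) = φ(a). -/
open Set

/-!
The running infimum `m t = inf_{[0,t]} ψ` is antitone, and it is continuous because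
`m t = inf_{u ∈ [0,1]} ψ (t u)` is an infimum over a fixed compact set of a jointly continuous
function. Then `x = ψ - min 0 m ≥ ψ - m ≥ 0` and `φ = -min 0 m` is nondecreasing. If `φ` grew on
`[a, b]`, the infimum of `ψ` over `[0, b]` would be a new negative minimum attained at some
`s ∈ [a, b]`, where `m s = ψ s` forces `x s = 0`.
-/

section RunningInf

variable {α : Type*} [ConditionallyCompleteLinearOrder α]

noncomputable def runningInf (ψ : ℝ → α) (t : ℝ) : α := sInf (ψ '' Icc 0 t)

lemma runningInf_zero (ψ : ℝ → α) : runningInf ψ 0 = ψ 0 := by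
  rw [runningInf, Icc_self, image_singleton, csInf_singleton]

variable [TopologicalSpace α] [OrderTopology α] {ψ : ℝ → α} {b t : ℝ}

lemma runningInf_le (hψ : ContinuousOn ψ (Ici 0)) (ht : 0 ≤ t) : runningInf ψ t ≤ ψ t :=
  (hψ.mono Icc_subset_Ici_self).sInf_image_Icc_le ⟨ht, le_rfl⟩

lemma runningInf_antitoneOn (hψ : ContinuousOn ψ (Ici 0)) :
    AntitoneOn (runningInf ψ) (Ici 0) := fun _ ha _ _ hab =>
  csInf_le_csInf (isCompact_Icc.image_of_continuousOn (hψ.mono Icc_subset_Ici_self)).bddBelow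
    ((nonempty_Icc.mpr ha).image ψ) (image_mono (Icc_subset_Icc le_rfl hab))

lemma exists_mem_Icc_eq_runningInf (hψ : ContinuousOn ψ (Ici 0)) (hb : 0 ≤ b) :
    ∃ s ∈ Icc 0 b, ψ s = runningInf ψ b :=
  (isCompact_Icc.image_of_continuousOn (hψ.mono Icc_subset_Ici_self)).sInf_mem
    ((nonempty_Icc.mpr hb).image ψ)

lemma continuousOn_runningInf (hψ : ContinuousOn ψ (Ici 0)) :
    ContinuousOn (runningInf ψ) (Ici 0) := by
  set g : ℝ → ℝ → α := fun t u => ψ (max 0 (t * u))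
  have hg : Continuous ↿g :=
    hψ.comp_continuous (by fun_prop) fun p => le_max_left 0 (p.1 * p.2)
  have hrescale : ∀ t ∈ Ici (0 : ℝ), sInf (g t '' Icc 0 1) = runningInf ψ t := by
    intro t (ht : 0 ≤ t)
    have hmax : EqOn (g t) (ψ ∘ (t * ·)) (Icc 0 1) := fun u hu => by
      simp only [g, Function.comp_apply, max_eq_right (mul_nonneg ht hu.1)]
    rw [hmax.image_eq, image_comp, image_mul_left_Icc ht zero_le_one, mul_zero, mul_one,
      runningInf]
  exact (isCompact_Icc.continuous_sInf hg).continuousOn.congr fun t ht => (hrescale t ht).symm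

end RunningInf

lemma min_zero_runningInf_eq_of_pos {ψ : ℝ → ℝ} (hψ : ContinuousOn ψ (Ici 0)) {a b : ℝ}
    (ha : 0 ≤ a) (hab : a ≤ b) (hpos : ∀ s ∈ Icc a b, 0 < ψ s - min 0 (runningInf ψ s)) :
    min 0 (runningInf ψ b) = min 0 (runningInf ψ a) := by
  have hanti := runningInf_antitoneOn hψ
  obtain ⟨s, ⟨hs0, hsb⟩, hψs⟩ := exists_mem_Icc_eq_runningInf hψ (ha.trans hab)
  rcases le_total s a with hsa | has
  · have hab_le : runningInf ψ a ≤ runningInf ψ b :=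
      hψs ▸ (hψ.mono Icc_subset_Ici_self).sInf_image_Icc_le ⟨hs0, hsa⟩
    rw [le_antisymm (hanti ha (ha.trans hab) hab) hab_le]
  · have hms : runningInf ψ s = ψ s :=
      le_antisymm (runningInf_le hψ hs0) (hψs ▸ hanti hs0 (hs0.trans hsb) hsb)
    have hψs_pos : 0 < ψ s := by
      have hxs := hpos s ⟨has, hsb⟩
      rw [hms] at hxs
      grind
    have hmb : 0 < runningInf ψ b := hψs ▸ hψs_pos
    rw [min_eq_left hmb.le, min_eq_left (hmb.trans_le (hanti ha (ha.trans hab) hab)).le]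

/-- Skorohod reflection on ℝ₊: existence.  For a continuous `ψ : [0,∞) → ℝ` with `ψ 0 ≥ 0`,
the pair `(x, φ)` given by `x t = ψ t - min 0 (inf_{s ∈ [0,t]} ψ s)` and `φ = x - ψ`
solves the Skorohod reflection problem: `x` is continuous and nonnegative, `φ` is
nondecreasing with `φ 0 = 0`, and `φ` is constant on any interval where `x` stays positive. -/
theorem skorohod_reflection_existence
    (ψ : ℝ → ℝ) (hψ : ContinuousOn ψ (Ici 0)) (hψ0 : 0 ≤ ψ 0)
    (x φ : ℝ → ℝ)
    (hx : ∀ t, x t = ψ t - min 0 (sInf (ψ '' Icc 0 t)))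
    (hφ : ∀ t, φ t = x t - ψ t) :
    ContinuousOn x (Ici 0) ∧
    (∀ t, 0 ≤ t → 0 ≤ x t) ∧
    MonotoneOn φ (Ici 0) ∧
    φ 0 = 0 ∧
    (∀ a b, 0 ≤ a → a ≤ b → (∀ s ∈ Icc a b, 0 < x s) → φ b = φ a) := by
  have hx' : ∀ t, x t = ψ t - min 0 (runningInf ψ t) := hx
  have hφ' : ∀ t, φ t = -min 0 (runningInf ψ t) := fun t => by rw [hφ, hx']; ring
  refine ⟨?_, fun t ht => ?_, fun a ha b hb hab => ?_, ?_, fun a b ha hab hpos => ?_⟩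
  · exact (hψ.sub (continuousOn_const.inf (continuousOn_runningInf hψ))).congr fun t _ => hx' t
  · rw [hx']
    linarith [min_le_right 0 (runningInf ψ t), runningInf_le hψ ht]
  · rw [hφ', hφ']
    exact neg_le_neg (min_le_min le_rfl (runningInf_antitoneOn hψ ha hb hab))
  · rw [hφ', runningInf_zero, min_eq_left hψ0, neg_zero]
  · rw [hφ', hφ', min_zero_runningInf_eq_of_pos hψ ha hab fun s hs => hx' s ▸ hpos s hs]
end

section
/- Let ψ : [0,∞) → ℝ be a continuous function with ψ(0) ≥ 0. Suppose x, φ : [0,∞) → ℝ satisfy: x is continuous, x(t) = ψ(t) + φ(t) for all t ≥ 0, x(t) ≥ 0 for all t ≥ 0, φ is nondecreasing with φ(0) = 0, and for all 0 ≤ a ≤ b, if x(s) > 0 for every s ∈ (a,b) then φ(b) = φ(a). Then x(t) = Γ(ψ)(t) = ψ(t) − min(0, inf_{s∈[0,t]} ψ(s)) and φ(t) = −min(0, inf_{s∈[0,t]} ψ(s)) for all t ≥ 0; in particular the solution of the Skorohod reflection problem associated with ψ is unique. -/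
open Set

/-!
The lower bound `-min 0 (inf ψ) ≤ φ t` only uses `x ≥ 0` and the monotonicity of `φ`:
`ψ s = x s - φ s ≥ -φ t` on `[0, t]`. For the upper bound take the last zero `u ≤ t` of `x`
(or `u = 0` if there is none); `φ` is flat on `[u, t]`, so `φ t = φ u = -ψ u`.
-/

theorem exists_last_zero_or_eq_left {f : ℝ → ℝ} {a b : ℝ} (hab : a ≤ b)
    (hf : ContinuousOn f (Icc a b)) :
    ∃ u ∈ Icc a b, (u = a ∨ f u = 0) ∧ ∀ s ∈ Ioo u b, f s ≠ 0 := by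
  set Z := insert a (Icc a b ∩ f ⁻¹' {0})
  have hZ : IsCompact Z :=
    (isCompact_Icc.of_isClosed_subset
      (hf.preimage_isClosed_of_isClosed isClosed_Icc isClosed_singleton)
      inter_subset_left).insert a
  obtain ⟨u, huZ, hu_max⟩ := hZ.exists_isGreatest (insert_nonempty _ _)
  refine ⟨u, ?_, ?_, fun s hs hfs => (hu_max (Or.inr ⟨⟨?_, hs.2.le⟩, hfs⟩)).not_gt hs.1⟩
  · rcases huZ with rfl | ⟨hu, -⟩
    exacts [left_mem_Icc.2 hab, hu]
  · exact huZ.imp id (·.2)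
  · exact (hu_max (mem_insert a _)).trans hs.1.le

theorem neg_min_zero_csInf_le {S : Set ℝ} {c : ℝ} (hS : S.Nonempty) (hc : 0 ≤ c)
    (h : ∀ y ∈ S, -c ≤ y) : -min 0 (sInf S) ≤ c :=
  neg_le.1 (le_min (neg_nonpos.2 hc) (le_csInf hS h))

theorem neg_le_neg_min_zero_csInf {S : Set ℝ} {y : ℝ} (hS : BddBelow S) (hy : y ∈ S) :
    -y ≤ -min 0 (sInf S) :=
  neg_le_neg ((min_le_right _ _).trans (csInf_le hS hy))

theorem skorohod_reflection_uniqueness_general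
    (ψ x φ : ℝ → ℝ)
    (hxcont : ContinuousOn x (Ici 0))
    (hxψφ : ∀ t, 0 ≤ t → x t = ψ t + φ t)
    (hxnn : ∀ t, 0 ≤ t → 0 ≤ x t)
    (hφmono : MonotoneOn φ (Ici 0))
    (hφ0 : φ 0 = 0)
    (hflat : ∀ a b, 0 ≤ a → a ≤ b → (∀ s ∈ Ioo a b, 0 < x s) → φ b = φ a) :
    ∀ t, 0 ≤ t →
      x t = ψ t - min 0 (sInf (ψ '' Icc 0 t)) ∧
      φ t = - min 0 (sInf (ψ '' Icc 0 t)) := by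
  intro t ht
  have hφ_nonneg : 0 ≤ φ t := hφ0 ▸ hφmono self_mem_Ici ht ht
  have hψ_ge : ∀ s ∈ Icc 0 t, -φ t ≤ ψ s := fun s hs => by
    linarith [hxψφ s hs.1, hxnn s hs.1, hφmono hs.1 ht hs.2]
  have hlower := neg_min_zero_csInf_le ⟨ψ 0, mem_image_of_mem ψ (left_mem_Icc.2 ht)⟩
    hφ_nonneg (forall_mem_image.2 hψ_ge)
  obtain ⟨u, hu, hu_zero, hx_ne⟩ :=
    exists_last_zero_or_eq_left ht (hxcont.mono fun s hs => hs.1)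
  have hφu : φ t = φ u :=
    hflat u t hu.1 hu.2 fun s hs => (hxnn s (hu.1.trans hs.1.le)).lt_of_ne' (hx_ne s hs)
  have hupper : φ t ≤ -min 0 (sInf (ψ '' Icc 0 t)) := by
    rcases hu_zero with rfl | hxu
    · rw [hφu, hφ0, neg_nonneg]
      exact min_le_left _ _
    · have hψu : φ u = -ψ u := by linarith [hxψφ u hu.1]
      rw [hφu, hψu]
      exact neg_le_neg_min_zero_csInf ⟨-φ t, forall_mem_image.2 hψ_ge⟩ (mem_image_of_mem ψ hu)
  have hφt := le_antisymm hupper hlower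
  exact ⟨by rw [hxψφ t ht, hφt]; ring, hφt⟩

/-- Skorohod reflection on ℝ₊: uniqueness.  If `(x, φ)` solves the Skorohod reflection
problem associated with a continuous `ψ : [0,∞) → ℝ` with `ψ 0 ≥ 0` (i.e. `x = ψ + φ ≥ 0`,
`x` continuous, `φ` nondecreasing with `φ 0 = 0` and constant on intervals where `x > 0`),
then `x t = ψ t - min 0 (inf_{s ∈ [0,t]} ψ s)` and `φ t = - min 0 (inf_{s ∈ [0,t]} ψ s)`. -/
theorem skorohod_reflection_uniqueness
    (ψ x φ : ℝ → ℝ) (hψ : ContinuousOn ψ (Ici 0)) (hψ0 : 0 ≤ ψ 0)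
    (hxcont : ContinuousOn x (Ici 0))
    (hxψφ : ∀ t, 0 ≤ t → x t = ψ t + φ t)
    (hxnn : ∀ t, 0 ≤ t → 0 ≤ x t)
    (hφmono : MonotoneOn φ (Ici 0))
    (hφ0 : φ 0 = 0)
    (hflat : ∀ a b, 0 ≤ a → a ≤ b → (∀ s ∈ Ioo a b, 0 < x s) → φ b = φ a) :
    ∀ t, 0 ≤ t →
      x t = ψ t - min 0 (sInf (ψ '' Icc 0 t)) ∧
      φ t = - min 0 (sInf (ψ '' Icc 0 t)) :=
  skorohod_reflection_uniqueness_general ψ x φ hxcont hxψφ hxnn hφmono hφ0 hflat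
end

section
/- Let ψ₁, ψ₂ : [0,∞) → ℝ be continuous functions. Then for every t ≥ 0, sup_{s∈[0,t]} |Γ(ψ₁)(s) − Γ(ψ₂)(s)| ≤ 2 · sup_{s∈[0,t]} |ψ₁(s) − ψ₂(s)|, where Γ(ψ)(t) = ψ(t) − min(0, inf_{s∈[0,t]} ψ(s)). In particular, the Skorohod reflection map Γ is Lipschitz continuous with constant 2 for the locally uniform metric. -/
/-!
The running infimum is 1-Lipschitz for the uniform distance: if `|ψ₁ - ψ₂| ≤ M` on `[0, s]`, the
infima of `ψ₁` and `ψ₂` over `[0, s]` differ by at most `M`, and so do their truncations `min 0 ·`.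
Adding the direct difference `|ψ₁ s - ψ₂ s| ≤ M` gives the constant `2`.
-/

open Set

section InfImage

variable {α : Type*} {s : Set α} {f g : α → ℝ} {M : ℝ}

theorem csInf_image_le_csInf_image_add (hs : s.Nonempty) (hf : BddBelow (f '' s))
    (hfg : ∀ u ∈ s, f u ≤ g u + M) : sInf (f '' s) ≤ sInf (g '' s) + M := by
  rw [← sub_le_iff_le_add]
  refine le_csInf (hs.image g) ?_
  rintro _ ⟨u, hu, rfl⟩
  linarith [csInf_le hf (mem_image_of_mem f hu), hfg u hu]

theorem abs_csInf_image_sub_csInf_image_le (hs : s.Nonempty) (hf : BddBelow (f '' s))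
    (hg : BddBelow (g '' s)) (hfg : ∀ u ∈ s, |f u - g u| ≤ M) :
    |sInf (f '' s) - sInf (g '' s)| ≤ M := by
  rw [abs_sub_le_iff]
  constructor
  · linarith [csInf_image_le_csInf_image_add (g := g) hs hf fun u hu => by
      linarith [(abs_le.mp (hfg u hu)).2]]
  · linarith [csInf_image_le_csInf_image_add (g := f) hs hg fun u hu => by
      linarith [(abs_le.mp (hfg u hu)).1]]

end InfImage

noncomputable def skorohodReflection (ψ : ℝ → ℝ) (s : ℝ) : ℝ :=
  ψ s - min 0 (sInf (ψ '' Icc 0 s))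

theorem abs_skorohodReflection_sub_le {ψ₁ ψ₂ : ℝ → ℝ} {s M : ℝ} (hs : 0 ≤ s)
    (h₁ : ContinuousOn ψ₁ (Icc 0 s)) (h₂ : ContinuousOn ψ₂ (Icc 0 s))
    (hψ : ∀ u ∈ Icc 0 s, |ψ₁ u - ψ₂ u| ≤ M) :
    |skorohodReflection ψ₁ s - skorohodReflection ψ₂ s| ≤ 2 * M := by
  have hinf : |sInf (ψ₁ '' Icc 0 s) - sInf (ψ₂ '' Icc 0 s)| ≤ M :=
    abs_csInf_image_sub_csInf_image_le (nonempty_Icc.mpr hs)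
      (isCompact_Icc.image_of_continuousOn h₁).bddBelow
      (isCompact_Icc.image_of_continuousOn h₂).bddBelow hψ
  have hmin : |min 0 (sInf (ψ₁ '' Icc 0 s)) - min 0 (sInf (ψ₂ '' Icc 0 s))| ≤ M :=
    (abs_min_sub_min_le_max _ _ _ _).trans (by simpa using hinf)
  calc |skorohodReflection ψ₁ s - skorohodReflection ψ₂ s|
      = |(ψ₁ s - ψ₂ s) - (min 0 (sInf (ψ₁ '' Icc 0 s)) - min 0 (sInf (ψ₂ '' Icc 0 s)))| := by
        unfold skorohodReflection; ring_nf
    _ ≤ |ψ₁ s - ψ₂ s| + |min 0 (sInf (ψ₁ '' Icc 0 s)) - min 0 (sInf (ψ₂ '' Icc 0 s))| :=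
        abs_sub _ _
    _ ≤ 2 * M := by linarith [hψ s (right_mem_Icc.mpr hs)]

/-- Lipschitz continuity (with constant 2) of the Skorohod reflection map
`Γ(ψ)(t) = ψ t - min 0 (inf_{s ∈ [0,t]} ψ s)` for the locally uniform metric:
for continuous `ψ₁, ψ₂ : [0,∞) → ℝ` and every `t ≥ 0`,
`sup_{s ∈ [0,t]} |Γ(ψ₁)(s) - Γ(ψ₂)(s)| ≤ 2 sup_{s ∈ [0,t]} |ψ₁ s - ψ₂ s|`. -/
theorem skorohod_map_lipschitz
    (ψ₁ ψ₂ : ℝ → ℝ)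
    (h₁ : ContinuousOn ψ₁ (Ici 0)) (h₂ : ContinuousOn ψ₂ (Ici 0)) :
    ∀ t, 0 ≤ t →
      sSup ((fun s => |(ψ₁ s - min 0 (sInf (ψ₁ '' Icc 0 s))) -
                       (ψ₂ s - min 0 (sInf (ψ₂ '' Icc 0 s)))|) '' Icc 0 t)
        ≤ 2 * sSup ((fun s => |ψ₁ s - ψ₂ s|) '' Icc 0 t) := by
  intro t ht
  have h₁' : ContinuousOn ψ₁ (Icc 0 t) := h₁.mono Icc_subset_Ici_self
  have h₂' : ContinuousOn ψ₂ (Icc 0 t) := h₂.mono Icc_subset_Ici_self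
  have hbdd : BddAbove ((fun s => |ψ₁ s - ψ₂ s|) '' Icc 0 t) :=
    (isCompact_Icc.image_of_continuousOn (h₁'.sub h₂').abs).bddAbove
  refine csSup_le ((nonempty_Icc.mpr ht).image _) ?_
  rintro _ ⟨s, hs, rfl⟩
  have hsub : Icc 0 s ⊆ Icc 0 t := Icc_subset_Icc_right hs.2
  exact abs_skorohodReflection_sub_le hs.1 (h₁'.mono hsub) (h₂'.mono hsub)
    fun u hu => le_csSup hbdd (mem_image_of_mem _ (hsub hu))
end

section
/- Let G = (V,E) be a finite simple undirected graph with nonempty vertex set V and adjacency matrix A, let ν(G) be the largest eigenvalue of A, and let α, β ∈ ℝ satisfy α < 0 and α + β ν(G) < 0. Let (N_n)_{n∈ℕ} be positive integers with N_n/√n → ∞ and N_n/n → 0 as n → ∞. For each n define the finite grid S^n = {k/√n : k = 0, 1, …, N_n}^V ⊂ ℝ^V, the function W_n(x) = (α/2) Σ_{v∈V} x_v² + β Σ_{{u,v}∈E} x_u x_v − (α/(2√n)) Σ_{v∈V} x_v, and U(x) = (α/2) Σ_{v∈V} x_v² + β Σ_{{u,v}∈E} x_u x_v. Then for every bounded continuous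 function f : ℝ^V → ℝ, n^{−|V|/2} Σ_{x∈S^n} f(x) e^{W_n(x)} → ∫_{[0,∞)^V} f(x) e^{U(x)} dx as n → ∞, where the integral is with respect to Lebesgue measure on the nonnegative orthant and is finite. -/
/-!
Spread the summand at each grid point `k/√n` over the cell `∏_v [k_v/√n, (k_v+1)/√n)`, of
volume `n^{-|V|/2}`: the normalised Riemann sum becomes the integral of a step function. Since
`N_n/√n → ∞` the grid eventually covers every point of the orthant, and the linear term of `W_n`
vanishes, so the step functions converge pointwise to `f e^U` there (and vanish off it).
Dominated convergence applies because on the orthant `U(x) ≤ -c |x|²` with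
`c = -max(α, α + βν)/2 > 0` (for `β ≥ 0` by the Rayleigh bound, for `β < 0` since the edge term
is nonpositive), while on the grid the linear term is at most `|α| |V| N_n / (2n) ≤ 1` eventually.
-/

open Finset MeasureTheory Filter

/-- `U(x) = (α/2) Σ_v x_v² + β Σ_{{u,v} ∈ E} x_u x_v`, with the edge sum written as half
of the double sum over ordered adjacent pairs. -/
noncomputable def Ufun {V : Type*} [Fintype V] (G : SimpleGraph V) [DecidableRel G.Adj]
    (α β : ℝ) (x : V → ℝ) : ℝ :=
  α / 2 * ∑ v, x v ^ 2 + β * (∑ v, ∑ u, if G.Adj v u then x v * x u else 0) / 2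

/-- `W_n(x) = U(x) - (α/(2√n)) Σ_v x_v`. -/
noncomputable def Wn {V : Type*} [Fintype V] (G : SimpleGraph V) [DecidableRel G.Adj]
    (α β : ℝ) (n : ℕ) (x : V → ℝ) : ℝ :=
  Ufun G α β x - α / (2 * Real.sqrt n) * ∑ v, x v

open Topology

namespace Matrix.IsHermitian

variable {n : Type*} [Fintype n] [DecidableEq n] {A : Matrix n n ℝ}

theorem dotProduct_mulVec_le_iSup_eigenvalues_mul (hA : A.IsHermitian) (x : n → ℝ) :
    x ⬝ᵥ A *ᵥ x ≤ (⨆ i, hA.eigenvalues i) * (x ⬝ᵥ x) := by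
  set U : Matrix n n ℝ := (hA.eigenvectorUnitary : Matrix n n ℝ)
  have hUt : star U = Uᵀ := by
    rw [star_eq_conjTranspose, conjTranspose_eq_transpose_of_trivial]
  have hUU : U * Uᵀ = 1 := hUt ▸ Unitary.mul_star_self_of_mem hA.eigenvectorUnitary.2
  have hA' : A = U * diagonal hA.eigenvalues * Uᵀ := by
    conv_lhs => rw [hA.spectral_theorem, Unitary.conjStarAlgAut_apply]
    rw [hUt]; rfl
  set y := Uᵀ *ᵥ x
  have hxy : ∀ w, x ⬝ᵥ U *ᵥ w = y ⬝ᵥ w := fun w => by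
    rw [dotProduct_mulVec, ← mulVec_transpose]
  have hyy : y ⬝ᵥ y = x ⬝ᵥ x := by
    rw [← hxy, mulVec_mulVec, hUU, one_mulVec]
  have hdiag : x ⬝ᵥ A *ᵥ x = ∑ i, hA.eigenvalues i * (y i * y i) := by
    conv_lhs => rw [hA', ← mulVec_mulVec, ← mulVec_mulVec, hxy]
    simp only [dotProduct, mulVec_diagonal]
    exact Finset.sum_congr rfl fun i _ => by ring
  rw [hdiag, ← hyy, dotProduct, Finset.mul_sum]
  gcongr with i
  · exact mul_self_nonneg _
  · exact le_ciSup (Set.finite_range hA.eigenvalues).bddAbove i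

end Matrix.IsHermitian

section GraphEnergy

open Matrix

variable {V : Type*} [Fintype V] (G : SimpleGraph V) [DecidableRel G.Adj] (α β : ℝ)

theorem sum_sum_adj_mul_eq_dotProduct (x : V → ℝ) :
    (∑ v, ∑ u, if G.Adj v u then x v * x u else 0) = x ⬝ᵥ (G.adjMatrix ℝ *ᵥ x) := by
  simp only [dotProduct, mulVec, Finset.mul_sum]
  refine Finset.sum_congr rfl fun v _ => Finset.sum_congr rfl fun u _ => ?_
  by_cases h : G.Adj v u <;> simp [h]

theorem Ufun_le_of_nonneg [DecidableEq V] (hA : (G.adjMatrix ℝ).IsHermitian) {x : V → ℝ}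
    (hx : 0 ≤ x) :
    Ufun G α β x ≤ max α (α + β * ⨆ i, hA.eigenvalues i) / 2 * ∑ v, x v ^ 2 := by
  have hxx : x ⬝ᵥ x = ∑ v, x v ^ 2 := by simp only [dotProduct, sq]
  have hq : 0 ≤ ∑ v, x v ^ 2 := by positivity
  rw [Ufun, sum_sum_adj_mul_eq_dotProduct]
  rcases le_or_gt 0 β with hβ | hβ
  · have := mul_le_mul_of_nonneg_left (hA.dotProduct_mulVec_le_iSup_eigenvalues_mul x) hβ
    rw [hxx] at this
    nlinarith [le_max_right α (α + β * ⨆ i, hA.eigenvalues i)]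
  · have : 0 ≤ x ⬝ᵥ (G.adjMatrix ℝ *ᵥ x) :=
      dotProduct_nonneg_of_nonneg hx fun v => Finset.sum_nonneg fun u _ =>
        mul_nonneg (by simp only [SimpleGraph.adjMatrix_apply]; split_ifs <;> norm_num) (hx u)
    nlinarith [le_max_left α (α + β * ⨆ i, hA.eigenvalues i)]

theorem continuous_Ufun : Continuous (Ufun G α β) := by
  have hedge : Continuous fun x : V → ℝ => ∑ v, ∑ u, if G.Adj v u then x v * x u else 0 :=
    continuous_finsetSum _ fun v _ => continuous_finsetSum _ fun u _ => by split_ifs <;> fun_prop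
  unfold Ufun
  fun_prop

theorem tendsto_Wn {x : V → ℝ} {y : ℕ → V → ℝ} (hy : Tendsto y atTop (𝓝 x)) :
    Tendsto (fun n => Wn G α β n (y n)) atTop (𝓝 (Ufun G α β x)) := by
  have hcoef : Tendsto (fun n : ℕ => α / (2 * Real.sqrt n)) atTop (𝓝 0) :=
    tendsto_const_nhds.div_atTop <|
      (Real.tendsto_sqrt_atTop.comp tendsto_natCast_atTop_atTop).const_mul_atTop two_pos
  have hsum : Tendsto (fun n => ∑ v, y n v) atTop (𝓝 (∑ v, x v)) :=
    ((continuous_finsetSum _ fun v _ => continuous_apply v).tendsto x).comp hy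
  simpa [Wn] using ((continuous_Ufun G α β).tendsto x |>.comp hy).sub (hcoef.mul hsum)

theorem Wn_le_Ufun_add {n M : ℕ} (hα : α ≤ 0) {y : V → ℝ}
    (hy : ∀ v, y v ≤ M / Real.sqrt n) :
    Wn G α β n y ≤ Ufun G α β y + -α / 2 * Fintype.card V * (M / n) := by
  have hsum : ∑ v, y v ≤ Fintype.card V * (M / Real.sqrt n) := by
    simpa using Finset.sum_le_sum fun v (_ : v ∈ univ) => hy v
  calc Wn G α β n y = Ufun G α β y + -α / 2 * ((∑ v, y v) / Real.sqrt n) := by rw [Wn]; ring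
    _ ≤ Ufun G α β y + -α / 2 * (Fintype.card V * (M / Real.sqrt n) / Real.sqrt n) := by
        gcongr; linarith
    _ = _ := by rw [mul_div_assoc, div_div, Real.mul_self_sqrt n.cast_nonneg, mul_assoc]

end GraphEnergy

theorem exp_neg_mul_sq_le_exp_mul_exp {c x y : ℝ} (hc : 0 ≤ c) (hy : 0 ≤ y) (hyx : y ≤ x)
    (hxy : x ≤ y + 1) : Real.exp (-c * y ^ 2) ≤ Real.exp c * Real.exp (-c * (x - 1) ^ 2) := by
  have hsq : (x - 1) ^ 2 ≤ 1 + y ^ 2 := by nlinarith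
  rw [← Real.exp_add, Real.exp_le_exp]
  nlinarith [mul_le_mul_of_nonneg_left hsq hc]

section Grid

variable {V : Type*} {s : ℝ}

def gridCell (s : ℝ) (k : V → ℕ) : Set (V → ℝ) :=
  Set.univ.pi fun v => Set.Ico (k v / s) ((k v + 1) / s)

theorem mem_gridCell_iff (hs : 0 < s) {k : V → ℕ} {x : V → ℝ} :
    x ∈ gridCell s k ↔ ∀ v, 0 ≤ x v ∧ ⌊x v * s⌋₊ = k v := by
  simp only [gridCell, Set.mem_univ_pi, Set.mem_Ico, div_le_iff₀ hs, lt_div_iff₀ hs]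
  refine forall_congr' fun v => ⟨fun h => ?_, fun ⟨h0, hk⟩ => ?_⟩
  · have h0 : 0 ≤ x v * s := (Nat.cast_nonneg _).trans h.1
    exact ⟨nonneg_of_mul_nonneg_left h0 hs, (Nat.floor_eq_iff h0).2 h⟩
  · exact (Nat.floor_eq_iff (mul_nonneg h0 hs.le)).1 hk

theorem measurableSet_gridCell [Countable V] (k : V → ℕ) : MeasurableSet (gridCell s k) :=
  MeasurableSet.univ_pi fun _ => measurableSet_Ico

variable [Fintype V]

theorem volume_gridCell (hs : 0 < s) (k : V → ℕ) :
    volume (gridCell s k) = ENNReal.ofReal s⁻¹ ^ Fintype.card V := by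
  have hlen : ∀ v, ((k v : ℝ) + 1) / s - k v / s = s⁻¹ := fun v => by field_simp; ring
  simp [gridCell, volume_pi_pi, Real.volume_Ico, hlen]

theorem integrable_prod_exp_neg_mul_sq_sub_one {c : ℝ} (hc : 0 < c) :
    Integrable fun x : V → ℝ => ∏ v, Real.exp c * Real.exp (-c * (x v - 1) ^ 2) :=
  Integrable.fintype_prod (f := fun _ t => Real.exp c * Real.exp (-c * (t - 1) ^ 2)) fun _ =>
    ((integrable_exp_neg_mul_sq hc).comp_sub_right 1).const_mul _

variable [DecidableEq V] {M : ℕ}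

noncomputable def gridStep (s : ℝ) (M : ℕ) (φ : (V → ℝ) → ℝ) (x : V → ℝ) : ℝ :=
  ∑ k : V → Fin (M + 1),
    (gridCell s fun v => k v).indicator (fun _ => φ fun v => ((k v : ℕ) : ℝ) / s) x

theorem gridStep_apply (hs : 0 < s) (φ : (V → ℝ) → ℝ) (x : V → ℝ) :
    gridStep s M φ x =
      if ∀ v, 0 ≤ x v ∧ ⌊x v * s⌋₊ ≤ M then φ (fun v => ⌊x v * s⌋₊ / s) else 0 := by
  split_ifs with h
  · set k : V → Fin (M + 1) := fun v => ⟨⌊x v * s⌋₊, Nat.lt_succ_of_le (h v).2⟩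
    have hk : x ∈ gridCell s fun v => k v := (mem_gridCell_iff hs).2 fun v => ⟨(h v).1, rfl⟩
    rw [gridStep, Finset.sum_eq_single_of_mem k (mem_univ k), Set.indicator_of_mem hk]
    refine fun k' _ hk' => Set.indicator_of_notMem (fun hx => hk' ?_) _
    funext v
    exact Fin.ext (((mem_gridCell_iff hs).1 hx v).2.symm.trans ((mem_gridCell_iff hs).1 hk v).2)
  · refine Finset.sum_eq_zero fun k _ => Set.indicator_of_notMem (fun hx => h fun v => ?_) _
    obtain ⟨h0, hfloor⟩ := (mem_gridCell_iff hs).1 hx v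
    exact ⟨h0, hfloor ▸ Nat.lt_succ_iff.1 (k v).2⟩

theorem measurable_gridStep (φ : (V → ℝ) → ℝ) : Measurable (gridStep s M φ) :=
  Finset.measurable_sum _ fun _ _ => measurable_const.indicator (measurableSet_gridCell _)

theorem integral_gridStep (hs : 0 < s) (φ : (V → ℝ) → ℝ) :
    ∫ x, gridStep s M φ x =
      (s ^ Fintype.card V)⁻¹ * ∑ k : V → Fin (M + 1), φ fun v => ((k v : ℕ) : ℝ) / s := by
  have hvol : ∀ k : V → ℕ, volume.real (gridCell s k) = (s ^ Fintype.card V)⁻¹ := fun k => by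
    rw [measureReal_def, volume_gridCell hs, ENNReal.toReal_pow, ENNReal.toReal_ofReal
      (inv_nonneg.2 hs.le), inv_pow]
  simp only [gridStep]
  rw [integral_finsetSum, Finset.mul_sum]
  · simp only [integral_indicator_const _ (measurableSet_gridCell _), hvol, smul_eq_mul]
  · refine fun k _ => (integrable_indicator_iff (measurableSet_gridCell _)).2 ?_
    exact integrableOn_const (by simp [volume_gridCell hs])

theorem abs_gridStep_le (hs : 1 ≤ s) {φ : (V → ℝ) → ℝ} {K c : ℝ} (hc : 0 ≤ c)
    (hφ : ∀ y : V → ℝ, (∀ v, 0 ≤ y v ∧ y v ≤ M / s) → |φ y| ≤ K * Real.exp (-c * ∑ v, y v ^ 2))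
    (x : V → ℝ) :
    |gridStep s M φ x| ≤ K * ∏ v, Real.exp c * Real.exp (-c * (x v - 1) ^ 2) := by
  have hs0 : 0 < s := one_pos.trans_le hs
  have hK : 0 ≤ K := by
    have h0 : |φ 0| ≤ K := by simpa using hφ 0 fun v => ⟨le_rfl, by positivity⟩
    exact (abs_nonneg _).trans h0
  rw [gridStep_apply hs0]
  split_ifs with h
  · set y : V → ℝ := fun v => ⌊x v * s⌋₊ / s
    have hy : ∀ v, 0 ≤ y v ∧ y v ≤ x v ∧ x v ≤ y v + 1 := fun v => by
      have hfl := Nat.floor_le (mul_nonneg (h v).1 hs0.le)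
      have hlt := Nat.lt_floor_add_one (x v * s)
      refine ⟨by positivity, (div_le_iff₀ hs0).2 hfl, ?_⟩
      have : x v < y v + 1 / s := by rw [← add_div, lt_div_iff₀ hs0]; exact hlt
      linarith [(div_le_one hs0).2 hs]
    calc |φ y| ≤ K * Real.exp (-c * ∑ v, y v ^ 2) :=
          hφ y fun v => ⟨(hy v).1, div_le_div_of_nonneg_right (by exact_mod_cast (h v).2) hs0.le⟩
      _ = K * ∏ v, Real.exp (-c * y v ^ 2) := by rw [Finset.mul_sum, Real.exp_sum]
      _ ≤ K * ∏ v, Real.exp c * Real.exp (-c * (x v - 1) ^ 2) := by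
          gcongr with v
          exact exp_neg_mul_sq_le_exp_mul_exp hc (hy v).1 (hy v).2.1 (hy v).2.2
  · rw [abs_zero]
    positivity

theorem tendsto_gridStep {s : ℕ → ℝ} (hs : Tendsto s atTop atTop) {M : ℕ → ℕ}
    (hM : Tendsto (fun n => (M n : ℝ) / s n) atTop atTop) {φ : ℕ → (V → ℝ) → ℝ}
    {g : (V → ℝ) → ℝ} (hφ : ∀ x, (∀ v, 0 ≤ x v) → ∀ y : ℕ → V → ℝ, Tendsto y atTop (𝓝 x) →
      Tendsto (fun n => φ n (y n)) atTop (𝓝 (g x)))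
    (x : V → ℝ) :
    Tendsto (fun n => gridStep (s n) (M n) (φ n) x) atTop
      (𝓝 ({x | ∀ v, 0 ≤ x v}.indicator g x)) := by
  have hpos : ∀ᶠ n in atTop, 0 < s n := hs.eventually_gt_atTop 0
  by_cases hx : ∀ v, 0 ≤ x v
  · rw [Set.indicator_of_mem (show x ∈ {x : V → ℝ | ∀ v, 0 ≤ x v} from hx)]
    have hy : Tendsto (fun n v => (⌊x v * s n⌋₊ : ℝ) / s n) atTop (𝓝 x) :=
      tendsto_pi_nhds.2 fun v => (tendsto_nat_floor_mul_div_atTop (hx v)).comp hs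
    obtain ⟨B, hB⟩ := (Set.finite_range x).bddAbove
    refine (hφ x hx _ hy).congr' ?_
    filter_upwards [hpos, hM.eventually_ge_atTop B] with n hsn hMn
    refine (gridStep_apply hsn _ x).trans (if_pos fun v => ⟨hx v, Nat.floor_le_of_le ?_⟩) |>.symm
    exact (le_div_iff₀ hsn).1 ((hB ⟨v, rfl⟩).trans hMn)
  · rw [Set.indicator_of_notMem (show x ∉ {x : V → ℝ | ∀ v, 0 ≤ x v} from hx)]
    refine tendsto_const_nhds.congr' ?_
    filter_upwards [hpos] with n hsn
    exact ((gridStep_apply hsn _ x).trans (if_neg fun h => hx fun v => (h v).1)).symm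

theorem tendsto_sum_grid_of_dominated {s : ℕ → ℝ} (hs : Tendsto s atTop atTop) {M : ℕ → ℕ}
    (hM : Tendsto (fun n => (M n : ℝ) / s n) atTop atTop) {φ : ℕ → (V → ℝ) → ℝ}
    {g : (V → ℝ) → ℝ} (hφ : ∀ x, (∀ v, 0 ≤ x v) → ∀ y : ℕ → V → ℝ, Tendsto y atTop (𝓝 x) →
      Tendsto (fun n => φ n (y n)) atTop (𝓝 (g x)))
    {K c : ℝ} (hc : 0 < c)
    (hdom : ∀ᶠ n in atTop, ∀ y : V → ℝ, (∀ v, 0 ≤ y v ∧ y v ≤ M n / s n) →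
      |φ n y| ≤ K * Real.exp (-c * ∑ v, y v ^ 2)) :
    IntegrableOn g {x | ∀ v, 0 ≤ x v} ∧
      Tendsto (fun n => (s n ^ Fintype.card V)⁻¹ *
          ∑ k : V → Fin (M n + 1), φ n fun v => ((k v : ℕ) : ℝ) / s n)
        atTop (𝓝 (∫ x in {x | ∀ v, 0 ≤ x v}, g x)) := by
  have hS : MeasurableSet {x : V → ℝ | ∀ v, 0 ≤ x v} := by
    simp only [Set.ofPred_forall]
    exact MeasurableSet.iInter fun v => measurableSet_le measurable_const (measurable_pi_apply v)
  have hB := (integrable_prod_exp_neg_mul_sq_sub_one (V := V) hc).const_mul K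
  have hdomF : ∀ᶠ n in atTop, ∀ x, ‖gridStep (s n) (M n) (φ n) x‖ ≤
      K * ∏ v, Real.exp c * Real.exp (-c * (x v - 1) ^ 2) := by
    filter_upwards [hdom, hs.eventually_ge_atTop 1] with n hn hsn
    exact abs_gridStep_le hsn hc.le hn
  have hlim := tendsto_gridStep hs hM hφ
  have hmeas : ∀ n, AEStronglyMeasurable (gridStep (s n) (M n) (φ n)) :=
    fun n => (measurable_gridStep _).aestronglyMeasurable
  have hg : Integrable ({x | ∀ v, 0 ≤ x v}.indicator g) :=
    hB.mono' (aestronglyMeasurable_of_tendsto_ae atTop hmeas (ae_of_all _ hlim))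
      (ae_of_all _ fun x => le_of_tendsto (hlim x).norm (hdomF.mono fun n hn => hn x))
  refine ⟨(integrable_indicator_iff hS).1 hg, ?_⟩
  rw [← integral_indicator hS]
  refine (tendsto_integral_filter_of_dominated_convergence _ (Eventually.of_forall hmeas)
    (hdomF.mono fun n hn => ae_of_all _ hn) hB (ae_of_all _ hlim)).congr' ?_
  filter_upwards [hs.eventually_gt_atTop 0] with n hn
  exact integral_gridStep hn _

end Grid

theorem riemann_sum_convergence_general {V : Type*} [Fintype V] [DecidableEq V]
    (G : SimpleGraph V) [DecidableRel G.Adj] (α β : ℝ)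
    (hA : (G.adjMatrix ℝ).IsHermitian)
    (hα : α < 0) (hcrit : α + β * (⨆ i, hA.eigenvalues i) < 0)
    (N : ℕ → ℕ)
    (hN1 : Tendsto (fun n => (N n : ℝ) / Real.sqrt n) atTop atTop)
    (hN2 : Tendsto (fun n => (N n : ℝ) / n) atTop (nhds 0))
    (f : (V → ℝ) → ℝ) (hf : Continuous f) (hfb : ∃ C, ∀ x, |f x| ≤ C) :
    IntegrableOn (fun x => f x * Real.exp (Ufun G α β x)) {x | ∀ v, 0 ≤ x v} volume ∧
    Tendsto
      (fun n : ℕ => ((n : ℝ) ^ ((Fintype.card V : ℝ) / 2))⁻¹ *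
        ∑ k : V → Fin (N n + 1),
          f (fun v => ((k v : ℕ) : ℝ) / Real.sqrt n) *
            Real.exp (Wn G α β n fun v => ((k v : ℕ) : ℝ) / Real.sqrt n))
      atTop
      (nhds (∫ x in {x : V → ℝ | ∀ v, 0 ≤ x v}, f x * Real.exp (Ufun G α β x))) := by
  obtain ⟨C, hC⟩ := hfb
  obtain ⟨c, hc, hU⟩ : ∃ c > 0, ∀ y : V → ℝ, 0 ≤ y → Ufun G α β y ≤ -c * ∑ v, y v ^ 2 :=
    ⟨-max α (α + β * ⨆ i, hA.eigenvalues i) / 2, by linarith [max_lt hα hcrit],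
      fun y hy => (Ufun_le_of_nonneg G α β hA hy).trans_eq (by ring)⟩
  have hlin : ∀ᶠ n : ℕ in atTop, -α / 2 * Fintype.card V * (N n / n) ≤ 1 := by
    have h := hN2.const_mul (-α / 2 * Fintype.card V)
    rw [mul_zero] at h
    exact h.eventually (eventually_le_nhds one_pos)
  have hdom : ∀ᶠ n : ℕ in atTop, ∀ y : V → ℝ, (∀ v, 0 ≤ y v ∧ y v ≤ N n / Real.sqrt n) →
      |f y * Real.exp (Wn G α β n y)| ≤ C * Real.exp 1 * Real.exp (-c * ∑ v, y v ^ 2) := by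
    filter_upwards [hlin] with n hn y hy
    have hW : Wn G α β n y ≤ 1 + -c * ∑ v, y v ^ 2 := by
      linarith [Wn_le_Ufun_add G α β hα.le fun v => (hy v).2, hU y fun v => (hy v).1]
    rw [abs_mul, Real.abs_exp, mul_assoc, ← Real.exp_add]
    exact mul_le_mul (hC y) (Real.exp_le_exp.2 hW) (Real.exp_pos _).le ((abs_nonneg _).trans (hC y))
  have hscale : ∀ n : ℕ, (n : ℝ) ^ ((Fintype.card V : ℝ) / 2) = Real.sqrt n ^ Fintype.card V :=
    fun n => by
      rw [Real.sqrt_eq_rpow, ← Real.rpow_natCast, ← Real.rpow_mul n.cast_nonneg]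
      ring_nf
  simp_rw [hscale]
  exact tendsto_sum_grid_of_dominated (φ := fun n y => f y * Real.exp (Wn G α β n y))
    (g := fun x => f x * Real.exp (Ufun G α β x))
    (Real.tendsto_sqrt_atTop.comp tendsto_natCast_atTop_atTop) hN1
    (fun x _ y hy => ((hf.tendsto x).comp hy).mul
      ((Real.continuous_exp.tendsto _).comp (tendsto_Wn G α β hy))) hc hdom

/-- Riemann-sum convergence: under `α < 0`, `α + β ν(G) < 0`, `N_n/√n → ∞` and
`N_n/n → 0`, for every bounded continuous `f : ℝ^V → ℝ`, the function
`x ↦ f(x) e^{U(x)}` is integrable over the nonnegative orthant and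
`n^{-|V|/2} Σ_{x ∈ Sⁿ} f(x) e^{W_n(x)} → ∫_{[0,∞)^V} f(x) e^{U(x)} dx`, where
`Sⁿ = {k/√n : k = 0,…,N_n}^V` (grid points encoded by `k : V → Fin (N_n + 1)`). -/
theorem riemann_sum_convergence {V : Type*} [Fintype V] [DecidableEq V] [Nonempty V]
    (G : SimpleGraph V) [DecidableRel G.Adj] (α β : ℝ)
    (hA : (G.adjMatrix ℝ).IsHermitian)
    (hα : α < 0) (hcrit : α + β * (⨆ i, hA.eigenvalues i) < 0)
    (N : ℕ → ℕ) (hNpos : ∀ n, 0 < N n)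
    (hN1 : Tendsto (fun n => (N n : ℝ) / Real.sqrt n) atTop atTop)
    (hN2 : Tendsto (fun n => (N n : ℝ) / n) atTop (nhds 0))
    (f : (V → ℝ) → ℝ) (hf : Continuous f) (hfb : ∃ C, ∀ x, |f x| ≤ C) :
    IntegrableOn (fun x => f x * Real.exp (Ufun G α β x)) {x | ∀ v, 0 ≤ x v} volume ∧
    Tendsto
      (fun n : ℕ => ((n : ℝ) ^ ((Fintype.card V : ℝ) / 2))⁻¹ *
        ∑ k : V → Fin (N n + 1),
          f (fun v => ((k v : ℕ) : ℝ) / Real.sqrt n) *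
            Real.exp (Wn G α β n fun v => ((k v : ℕ) : ℝ) / Real.sqrt n))
      atTop
      (nhds (∫ x in {x : V → ℝ | ∀ v, 0 ≤ x v}, f x * Real.exp (Ufun G α β x))) :=
  riemann_sum_convergence_general G α β hA hα hcrit N hN1 hN2 f hf hfb
end
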